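/- Let (ν_ε)_{ε>0} be positive reals, (μ_ε)_{ε>0} ⊂ (0,1), (ℓ_ε)_{ε>0} positive reals, (I_ε)_{ε>0} Borel subsets of ℝ with Lebesgue measure ℓ_ε, and for each ε let f_ε : (0,∞) → [0,∞) be a probability density with f_ε ∈ L²((0,∞)). Set h_ε := μ_ε·f_ε and u_ε := (ν_ε ℓ_ε/(1−μ_ε))^{−1/2}·1_{I_ε}. If μ_ε → 0 and ν_ε ℓ_ε → ∞ as ε → 0⁺, then 𝔏'(ν_ε, μ_ε, u_ε, h_ε) → 0 and 𝔏̃'(ν_ε, μ_ε, u_ε, h_ε) → 0. (This is the concluding convergence claim of Example 5.5.) -/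

import Mathlib

open MeasureTheory Real Filter Topology
open scoped ENNReal

/-- The `L^p` norm (with respect to Lebesgue measure on `ℝ`) as a real number. -/
noncomputable def lpNorm (p : ℝ≥0∞) (f : ℝ → ℝ) : ℝ :=
  (eLpNorm f p volume).toReal

/-- The spectral-theory Gaussian bound `𝔏'(ν,μ,u,h)` of Theorem 5.2. -/
noncomputable def Lbound' (ν μ : ℝ) (u h : ℝ → ℝ) : ℝ :=
  Real.sqrt (2 / π) *
      Real.sqrt ((1 - ν / (1 - μ) * lpNorm 2 u ^ 2) ^ 2
        + ν / (1 - μ) ^ 3 *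
            min (μ ^ 2 * lpNorm 2 (fun t => u t ^ 2) ^ 2)
              (lpNorm 2 h ^ 2 * lpNorm 1 (fun t => u t ^ 2) ^ 2))
    + ν / (1 - μ) * lpNorm 3 u ^ 3
    + 2 * Real.sqrt (2 / π) * ν * μ / (1 - μ) ^ 2 * lpNorm 2 u ^ 2
    + ν * μ / (1 - μ) ^ 2 * lpNorm 2 u * lpNorm 2 (fun t => u t ^ 2)

/-- The bound `𝔏̃'(ν,μ,u,h)` for the approximated first chaos (Theorem 5.2). -/
noncomputable def LboundTilde' (ν μ : ℝ) (u h : ℝ → ℝ) : ℝ :=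
  Lbound' ν μ u h
    + Real.sqrt ν / (1 - μ) ^ ((3 : ℝ) / 2) *
        min (μ * lpNorm 2 u) (lpNorm 2 h * lpNorm 1 u)

/-! The normalisation of `u` makes `ν/(1-μ)·‖u‖₂² = 1`, so the leading term of `𝔏'` vanishes
exactly. Writing `a = ((1-μ)/(νℓ))^{1/2}` for the height of `u`, all `L^p` norms of `u` are
explicit, and every remaining term of `𝔏̃'` is either `a` or `μ/(1-μ)` times a quantity bounded
in `a`. Both bounds therefore tend to `0` as soon as `a → 0` (i.e. `νℓ → ∞`) and `μ → 0`. -/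

lemma lpNorm_nonneg (p : ℝ≥0∞) (f : ℝ → ℝ) : 0 ≤ lpNorm p f :=
  ENNReal.toReal_nonneg

lemma lpNorm_indicator_const {p : ℝ≥0∞} (hp0 : p ≠ 0) (hp : p ≠ ∞) {s : Set ℝ}
    (hs : MeasurableSet s) {L : ℝ} (hL : 0 ≤ L) (hvol : volume s = ENNReal.ofReal L) (a : ℝ) :
    lpNorm p (s.indicator fun _ => a) = |a| * L ^ (1 / p.toReal) := by
  unfold _root_.lpNorm
  rw [eLpNorm_indicator_const hs hp0 hp, hvol,
    ENNReal.ofReal_rpow_of_nonneg hL (by positivity), ENNReal.toReal_mul,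
    ENNReal.toReal_ofReal (by positivity), toReal_enorm, Real.norm_eq_abs]

lemma Lbound'_nonneg {ν μ : ℝ} (u h : ℝ → ℝ) (hν : 0 ≤ ν) (hμ0 : 0 ≤ μ) (hμ1 : μ ≤ 1) :
    0 ≤ Lbound' ν μ u h := by
  have := sub_nonneg.2 hμ1
  have := lpNorm_nonneg 2 u
  have := lpNorm_nonneg 3 u
  have := lpNorm_nonneg 2 fun t => u t ^ 2
  unfold Lbound'
  positivity

lemma Lbound'_le_LboundTilde' {ν μ : ℝ} (u h : ℝ → ℝ) (hμ0 : 0 ≤ μ) (hμ1 : μ ≤ 1) :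
    Lbound' ν μ u h ≤ LboundTilde' ν μ u h :=
  le_add_of_nonneg_right <|
    mul_nonneg (div_nonneg (sqrt_nonneg _) (rpow_nonneg (sub_nonneg.2 hμ1) _))
      (le_min (mul_nonneg hμ0 (lpNorm_nonneg _ _))
        (mul_nonneg (lpNorm_nonneg _ _) (lpNorm_nonneg _ _)))

noncomputable def indicatorMajorant (m a : ℝ) : ℝ :=
  a + m / (1 - m) * (√(2 / π) * a + 2 * √(2 / π) + a + 1)

section Indicator

variable {n m L a : ℝ} {s : Set ℝ}

lemma lpNorm_two_indicator_const (hs : MeasurableSet s) (hL : 0 ≤ L)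
    (hvol : volume s = ENNReal.ofReal L) (ha : 0 ≤ a) :
    lpNorm 2 (s.indicator fun _ => a) = a * √L := by
  rw [lpNorm_indicator_const (by norm_num) (by norm_num) hs hL hvol, abs_of_nonneg ha,
    sqrt_eq_rpow, ENNReal.toReal_ofNat]

lemma lpNorm_three_indicator_const_pow (hs : MeasurableSet s) (hL : 0 ≤ L)
    (hvol : volume s = ENNReal.ofReal L) (ha : 0 ≤ a) :
    lpNorm 3 (s.indicator fun _ => a) ^ 3 = a ^ 3 * L := by
  rw [lpNorm_indicator_const (by norm_num) (by norm_num) hs hL hvol, abs_of_nonneg ha,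
    mul_pow, ENNReal.toReal_ofNat, ← rpow_natCast (L ^ _), ← rpow_mul hL]
  norm_num

lemma lpNorm_two_indicator_const_sq (hs : MeasurableSet s) (hL : 0 ≤ L)
    (hvol : volume s = ENNReal.ofReal L) :
    lpNorm 2 (fun t => s.indicator (fun _ => a) t ^ 2) = a ^ 2 * √L := by
  have hsq : (fun t => s.indicator (fun _ => a) t ^ 2) = s.indicator fun _ => a ^ 2 := by
    ext t; by_cases ht : t ∈ s <;> simp [ht]
  rw [hsq, lpNorm_two_indicator_const hs hL hvol (sq_nonneg a)]

lemma Lbound'_indicator_le (h : ℝ → ℝ) (hs : MeasurableSet s) (hL : 0 ≤ L)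
    (hvol : volume s = ENNReal.ofReal L) (ha : 0 ≤ a) (hm0 : 0 ≤ m) (hm1 : m < 1)
    (hscale : n * a ^ 2 * L = 1 - m) :
    Lbound' n m (s.indicator fun _ => a) h
      ≤ a + m / (1 - m) * (√(2 / π) * a + 2 * √(2 / π) + a) := by
  rw [Lbound', lpNorm_two_indicator_const hs hL hvol ha,
    lpNorm_three_indicator_const_pow hs hL hvol ha, lpNorm_two_indicator_const_sq hs hL hvol]
  obtain ⟨r, hr, rfl⟩ : ∃ r, 0 ≤ r ∧ L = r ^ 2 := ⟨√L, sqrt_nonneg L, (sq_sqrt hL).symm⟩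
  rw [sqrt_sq hr]
  have h1m : 0 < 1 - m := by linarith
  have hn : 0 < n :=
    pos_of_mul_pos_left (b := a ^ 2 * r ^ 2) (by rw [← mul_assoc, hscale]; exact h1m)
      (by positivity)
  have hvar : √((1 - n / (1 - m) * (a * r) ^ 2) ^ 2 + n / (1 - m) ^ 3 *
      min (m ^ 2 * (a ^ 2 * r) ^ 2)
        (lpNorm 2 h ^ 2 * lpNorm 1 (fun t => s.indicator (fun _ => a) t ^ 2) ^ 2))
      ≤ m * a / (1 - m) := by
    have hleading : 1 - n / (1 - m) * (a * r) ^ 2 = 0 := by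
      rw [show n / (1 - m) * (a * r) ^ 2 = n * a ^ 2 * r ^ 2 / (1 - m) by ring, hscale,
        div_self h1m.ne', sub_self]
    rw [sqrt_le_iff, hleading]
    refine ⟨div_nonneg (mul_nonneg hm0 ha) h1m.le, ?_⟩
    calc (0 : ℝ) ^ 2 + n / (1 - m) ^ 3 * min _ _
        ≤ n / (1 - m) ^ 3 * (m ^ 2 * (a ^ 2 * r) ^ 2) := by
          rw [zero_pow two_ne_zero, zero_add]
          exact mul_le_mul_of_nonneg_left (min_le_left _ _) (by positivity)
      _ = (m * a / (1 - m)) ^ 2 := by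
          rw [show n / (1 - m) ^ 3 * (m ^ 2 * (a ^ 2 * r) ^ 2)
            = m ^ 2 * a ^ 2 * (n * a ^ 2 * r ^ 2) / (1 - m) ^ 3 by ring, hscale]
          field_simp
  have hcube : n / (1 - m) * (a ^ 3 * r ^ 2) = a := by
    rw [show n / (1 - m) * (a ^ 3 * r ^ 2) = a * (n * a ^ 2 * r ^ 2) / (1 - m) by ring, hscale]
    field_simp
  have hsecond : 2 * √(2 / π) * n * m / (1 - m) ^ 2 * (a * r) ^ 2
      = 2 * √(2 / π) * m / (1 - m) := by
    rw [show 2 * √(2 / π) * n * m / (1 - m) ^ 2 * (a * r) ^ 2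
      = 2 * √(2 / π) * m * (n * a ^ 2 * r ^ 2) / (1 - m) ^ 2 by ring, hscale]
    field_simp
  have hcross : n * m / (1 - m) ^ 2 * (a * r) * (a ^ 2 * r) = m * a / (1 - m) := by
    rw [show n * m / (1 - m) ^ 2 * (a * r) * (a ^ 2 * r)
      = m * a * (n * a ^ 2 * r ^ 2) / (1 - m) ^ 2 by ring, hscale]
    field_simp
  rw [hcube, hsecond, hcross]
  calc √(2 / π) * √_ + a + 2 * √(2 / π) * m / (1 - m) + m * a / (1 - m)
      ≤ √(2 / π) * (m * a / (1 - m)) + a + 2 * √(2 / π) * m / (1 - m) + m * a / (1 - m) := by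
        gcongr
    _ = _ := by ring

lemma LboundTilde'_indicator_le (h : ℝ → ℝ) (hs : MeasurableSet s) (hL : 0 ≤ L)
    (hvol : volume s = ENNReal.ofReal L) (ha : 0 ≤ a) (hm0 : 0 ≤ m) (hm1 : m < 1)
    (hscale : n * a ^ 2 * L = 1 - m) :
    LboundTilde' n m (s.indicator fun _ => a) h ≤ indicatorMajorant m a := by
  have h1m : 0 < 1 - m := by linarith
  have hn : 0 ≤ n :=
    (pos_of_mul_pos_left (b := a ^ 2 * L) (by rw [← mul_assoc, hscale]; exact h1m)
      (by positivity)).le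
  have hpow : (1 - m) ^ ((3 : ℝ) / 2) = (1 - m) * √(1 - m) := by
    rw [show (3 : ℝ) / 2 = 1 + 1 / 2 by norm_num, rpow_add h1m, rpow_one, sqrt_eq_rpow]
  have hheight : √n * (a * √L) = √(1 - m) := by
    rw [← hscale, sqrt_mul (by positivity), sqrt_mul hn, sqrt_sq ha, mul_assoc]
  have hextra : √n / (1 - m) ^ ((3 : ℝ) / 2) *
      min (m * lpNorm 2 (s.indicator fun _ => a)) (lpNorm 2 h * lpNorm 1 (s.indicator fun _ => a))
      ≤ m / (1 - m) := by
    calc _ ≤ √n / (1 - m) ^ ((3 : ℝ) / 2) * (m * lpNorm 2 (s.indicator fun _ => a)) :=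
          mul_le_mul_of_nonneg_left (min_le_left _ _) (by rw [hpow]; positivity)
      _ = m / (1 - m) := by
          rw [lpNorm_two_indicator_const hs hL hvol ha, hpow,
            div_mul_eq_mul_div,
            show √n * (m * (a * √L)) = m * (√n * (a * √L)) by ring, hheight]
          have : 0 < √(1 - m) := sqrt_pos.2 h1m
          field_simp
  calc LboundTilde' n m (s.indicator fun _ => a) h
      ≤ a + m / (1 - m) * (√(2 / π) * a + 2 * √(2 / π) + a) + m / (1 - m) :=
        add_le_add (Lbound'_indicator_le h hs hL hvol ha hm0 hm1 hscale) hextra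
    _ = _ := by rw [indicatorMajorant]; ring

end Indicator

lemma tendsto_indicatorMajorant {α : Type*} {l : Filter α} {m a : α → ℝ}
    (hm : Tendsto m l (𝓝 0)) (ha : Tendsto a l (𝓝 0)) :
    Tendsto (fun x => indicatorMajorant (m x) (a x)) l (𝓝 0) := by
  simpa [indicatorMajorant] using
    ha.add ((hm.div (tendsto_const_nhds.sub hm) (by norm_num)).mul
      ((((ha.const_mul _).add tendsto_const_nhds).add ha).add tendsto_const_nhds))

lemma tendsto_inv_sqrt_div_zero {α : Type*} {l : Filter α} {x y : α → ℝ}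
    (hx : Tendsto x l atTop) (hy : ∀ᶠ ε in l, y ε ∈ Set.Ioc 0 1) :
    Tendsto (fun ε => (√(x ε / y ε))⁻¹) l (𝓝 0) := by
  refine tendsto_inv_atTop_zero.comp (tendsto_sqrt_atTop.comp
    (tendsto_atTop_mono' _ ?_ hx))
  filter_upwards [hy, hx.eventually_ge_atTop 0] with ε ⟨hy0, hy1⟩ hx0
  exact le_div_self hx0 hy0 hy1

lemma mul_inv_sqrt_div_sq_mul {n L m : ℝ} (hnL : 0 < n * L) (hm : m < 1) :
    n * (√(n * L / (1 - m)))⁻¹ ^ 2 * L = 1 - m := by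
  have hn := left_ne_zero_of_mul hnL.ne'
  have hL := right_ne_zero_of_mul hnL.ne'
  rw [inv_pow, sq_sqrt (div_nonneg hnL.le (by linarith)), inv_div]
  field_simp

theorem example_5_5_convergence_general (ν μ ℓ : ℝ → ℝ) (I : ℝ → Set ℝ) (f : ℝ → ℝ → ℝ)
    (hμ : ∀ ε > (0 : ℝ), μ ε ∈ Set.Ioo (0 : ℝ) 1)
    (hℓ : ∀ ε > (0 : ℝ), 0 < ℓ ε)
    (hI : ∀ ε > (0 : ℝ), MeasurableSet (I ε) ∧ volume (I ε) = ENNReal.ofReal (ℓ ε))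
    (hμ0 : Tendsto μ (𝓝[>] 0) (𝓝 0))
    (hνℓ : Tendsto (fun ε => ν ε * ℓ ε) (𝓝[>] 0) atTop) :
    let h : ℝ → ℝ → ℝ := fun ε x => μ ε * f ε x
    let u : ℝ → ℝ → ℝ := fun ε t => (Real.sqrt (ν ε * ℓ ε / (1 - μ ε)))⁻¹ *
      (I ε).indicator (fun _ => (1 : ℝ)) t
    Tendsto (fun ε => Lbound' (ν ε) (μ ε) (u ε) (h ε)) (𝓝[>] 0) (𝓝 0) ∧
    Tendsto (fun ε => LboundTilde' (ν ε) (μ ε) (u ε) (h ε)) (𝓝[>] 0) (𝓝 0) := by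
  intro h u
  have hu : ∀ ε, u ε = (I ε).indicator fun _ => (√(ν ε * ℓ ε / (1 - μ ε)))⁻¹ := fun ε => by
    ext t; by_cases ht : t ∈ I ε <;> simp [u, ht]
  have hgood : ∀ᶠ ε in 𝓝[>] (0 : ℝ), 0 < ε ∧ 0 < ν ε * ℓ ε :=
    eventually_mem_nhdsWithin.and (hνℓ.eventually_gt_atTop 0)
  have hmajorant := tendsto_indicatorMajorant hμ0 <|
    tendsto_inv_sqrt_div_zero (y := fun ε => 1 - μ ε) hνℓ <|
      hgood.mono fun ε ⟨hε, _⟩ => ⟨by linarith [(hμ ε hε).2], by linarith [(hμ ε hε).1]⟩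
  have hbounds : ∀ᶠ ε in 𝓝[>] (0 : ℝ),
      0 ≤ Lbound' (ν ε) (μ ε) (u ε) (h ε) ∧
      Lbound' (ν ε) (μ ε) (u ε) (h ε) ≤ LboundTilde' (ν ε) (μ ε) (u ε) (h ε) ∧
      LboundTilde' (ν ε) (μ ε) (u ε) (h ε)
        ≤ indicatorMajorant (μ ε) (√(ν ε * ℓ ε / (1 - μ ε)))⁻¹ := by
    filter_upwards [hgood] with ε ⟨hε, hpos⟩
    obtain ⟨hμ0ε, hμ1ε⟩ := hμ ε hε
    refine ⟨Lbound'_nonneg _ _ (pos_of_mul_pos_left hpos (hℓ ε hε).le).le hμ0ε.le hμ1ε.le,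
      Lbound'_le_LboundTilde' _ _ hμ0ε.le hμ1ε.le, ?_⟩
    rw [hu]
    exact LboundTilde'_indicator_le _ (hI ε hε).1 (hℓ ε hε).le (hI ε hε).2
      (inv_nonneg.2 (sqrt_nonneg _)) hμ0ε.le hμ1ε (mul_inv_sqrt_div_sq_mul hpos hμ1ε)
  exact ⟨squeeze_zero' (hbounds.mono fun _ hε => hε.1)
      (hbounds.mono fun _ hε => hε.2.1.trans hε.2.2) hmajorant,
    squeeze_zero' (hbounds.mono fun _ hε => hε.1.trans hε.2.1)
      (hbounds.mono fun _ hε => hε.2.2) hmajorant⟩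

/-- The concluding convergence claim of Example 5.5: with `h_ε = μ_ε f_ε` (each `f_ε`
a square-integrable probability density on `(0,∞)`, viewed on `ℝ` vanishing on
`(−∞,0]`) and `u_ε = (ν_ε ℓ_ε/(1−μ_ε))^{−1/2}·1_{I_ε}` (with `I_ε` of Lebesgue measure
`ℓ_ε`), if `μ_ε → 0` and `ν_ε ℓ_ε → ∞` as `ε → 0⁺`, then both
`𝔏'(ν_ε,μ_ε,u_ε,h_ε) → 0` and `𝔏̃'(ν_ε,μ_ε,u_ε,h_ε) → 0`. -/
theorem example_5_5_convergence (ν μ ℓ : ℝ → ℝ) (I : ℝ → Set ℝ) (f : ℝ → ℝ → ℝ)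
    (hν : ∀ ε > (0 : ℝ), 0 < ν ε)
    (hμ : ∀ ε > (0 : ℝ), μ ε ∈ Set.Ioo (0 : ℝ) 1)
    (hℓ : ∀ ε > (0 : ℝ), 0 < ℓ ε)
    (hI : ∀ ε > (0 : ℝ), MeasurableSet (I ε) ∧ volume (I ε) = ENNReal.ofReal (ℓ ε))
    (hf : ∀ ε > (0 : ℝ), Measurable (f ε) ∧ (∀ x, 0 ≤ f ε x) ∧
      (∀ x ≤ (0 : ℝ), f ε x = 0) ∧ Integrable (f ε) volume ∧
      (∫ x, f ε x) = 1 ∧ MemLp (f ε) 2 volume)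
    (hμ0 : Tendsto μ (𝓝[>] 0) (𝓝 0))
    (hνℓ : Tendsto (fun ε => ν ε * ℓ ε) (𝓝[>] 0) atTop) :
    let h : ℝ → ℝ → ℝ := fun ε x => μ ε * f ε x
    let u : ℝ → ℝ → ℝ := fun ε t => (Real.sqrt (ν ε * ℓ ε / (1 - μ ε)))⁻¹ *
      (I ε).indicator (fun _ => (1 : ℝ)) t
    Tendsto (fun ε => Lbound' (ν ε) (μ ε) (u ε) (h ε)) (𝓝[>] 0) (𝓝 0) ∧
    Tendsto (fun ε => LboundTilde' (ν ε) (μ ε) (u ε) (h ε)) (𝓝[>] 0) (𝓝 0) :=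
  example_5_5_convergence_general ν μ ℓ I f hμ hℓ hI hμ0 hνℓ
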